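/- For the function F(X₁,C,B,D) = ‖(A₁−X₁)⊙W₁‖_F² + ‖A₂ − X₁C − BD‖_F² with fixed C, B, D, the minimizer over X₁ is given row-wise by X₁(i,:) = E(i,:)·(diag(W₁(i,1)², …, W₁(i,k)²) + CCᵀ)^{-1}, where E = A₁⊙W₁⊙W₁ + (A₂ − BD)Cᵀ, provided each matrix diag(W₁(i,:)²) + CCᵀ is invertible (which holds whenever all W₁(i,j) > 0). -/
import Mathlib

open Matrix Filter Topology

noncomputable def frobSq {α β : Type*} [Fintype α] [Fintype β] (A : Matrix α β ℝ) : ℝ :=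
  ∑ i, ∑ j, (A i j) ^ 2

noncomputable def frob {α β : Type*} [Fintype α] [Fintype β] (A : Matrix α β ℝ) : ℝ :=
  Real.sqrt (frobSq A)
noncomputable def Ffun {m k nk rk : ℕ} (A₁ W₁ : Matrix (Fin m) (Fin k) ℝ)
    (A₂ : Matrix (Fin m) (Fin nk) ℝ) (X₁ : Matrix (Fin m) (Fin k) ℝ)
    (C : Matrix (Fin k) (Fin nk) ℝ) (B : Matrix (Fin m) (Fin rk) ℝ)
    (D : Matrix (Fin rk) (Fin nk) ℝ) : ℝ :=
  frobSq (Matrix.hadamard (A₁ - X₁) W₁) + frobSq (A₂ - X₁ * C - B * D)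

lemma frobSq_nonneg {α β : Type*} [Fintype α] [Fintype β] (A : Matrix α β ℝ) :
    0 ≤ frobSq A :=
  Finset.sum_nonneg fun _ _ => Finset.sum_nonneg fun _ _ => sq_nonneg _

/-- The row-wise update X₁(i,:) = E(i,:)(diag(W₁(i,:)²) + CCᵀ)⁻¹ with
E = A₁⊙W₁⊙W₁ + (A₂ − BD)Cᵀ minimizes F over X₁ with C, B, D fixed. -/
theorem stmt14 {m k nk rk : ℕ}
    (A₁ W₁ : Matrix (Fin m) (Fin k) ℝ) (A₂ : Matrix (Fin m) (Fin nk) ℝ)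
    (C : Matrix (Fin k) (Fin nk) ℝ) (B : Matrix (Fin m) (Fin rk) ℝ)
    (D : Matrix (Fin rk) (Fin nk) ℝ)
    (hW : ∀ i j, 0 < W₁ i j)
    (E : Matrix (Fin m) (Fin k) ℝ)
    (hE : E = Matrix.hadamard (Matrix.hadamard A₁ W₁) W₁ + (A₂ - B * D) * Cᵀ)
    (X₁ : Matrix (Fin m) (Fin k) ℝ)
    (hX₁ : ∀ i j, X₁ i j = ∑ l, E i l *
      ((Matrix.diagonal (fun t => (W₁ i t) ^ 2) + C * Cᵀ)⁻¹ l j)) :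
    ∀ Y : Matrix (Fin m) (Fin k) ℝ,
      Ffun A₁ W₁ A₂ X₁ C B D ≤ Ffun A₁ W₁ A₂ Y C B D := by
  intro Y
  set M : Fin m → Matrix (Fin k) (Fin k) ℝ :=
    fun i => Matrix.diagonal (fun t => (W₁ i t) ^ 2) + C * Cᵀ with hM
  -- positive definiteness, hence invertibility
  have hMdet : ∀ i, IsUnit (M i).det := by
    intro i
    have hpd : (M i).PosDef := by
      have h1 : (Matrix.diagonal (fun t => (W₁ i t) ^ 2)).PosDef :=
        Matrix.posDef_diagonal_iff.2 fun t => pow_pos (hW i t) 2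
      have h2 : (C * Cᵀ).PosSemidef := by
        have := Matrix.posSemidef_self_mul_conjTranspose C
        rwa [Matrix.conjTranspose_eq_transpose_of_trivial] at this
      exact h1.add_posSemidef h2
    exact hpd.det_pos.ne'.isUnit
  -- row equation : X₁ i ᵥ* M i = E i
  have hrow : ∀ i l, (∑ t, X₁ i t * M i t l) = E i l := by
    intro i l
    have hXi : (fun j => X₁ i j) = (E i) ᵥ* (M i)⁻¹ := by
      funext j
      rw [hX₁ i j]
      rfl
    have h : (fun j => X₁ i j) ᵥ* (M i) = E i := by
      rw [hXi, Matrix.vecMul_vecMul, Matrix.nonsing_inv_mul _ (hMdet i), Matrix.vecMul_one]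
    have := congrFun h l
    simpa [Matrix.vecMul, dotProduct] using this
  -- the gradient vanishes at X₁
  have hg : ∀ i l, W₁ i l ^ 2 * (A₁ i l - X₁ i l)
      + ∑ j, (A₂ - X₁ * C - B * D) i j * C l j = 0 := by
    intro i l
    have h1 : E i l = A₁ i l * W₁ i l * W₁ i l
        + ∑ j, (A₂ i j - (B * D) i j) * C l j := by
      rw [hE]
      simp [Matrix.add_apply, Matrix.hadamard_apply, Matrix.mul_apply, Matrix.sub_apply,
        Matrix.transpose_apply]
    have h2 : (∑ t, X₁ i t * M i t l)
        = X₁ i l * W₁ i l ^ 2 + ∑ j, (X₁ * C) i j * C l j := by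
      have hsplit : ∀ t, X₁ i t * M i t l
          = X₁ i t * Matrix.diagonal (fun s => (W₁ i s) ^ 2) t l
            + X₁ i t * (C * Cᵀ) t l := by
        intro t
        rw [hM]
        simp [Matrix.add_apply, mul_add]
      rw [Finset.sum_congr rfl fun t _ => hsplit t, Finset.sum_add_distrib]
      congr 1
      · simp [Matrix.diagonal_apply, mul_ite, Finset.sum_ite_eq, eq_comm]
      · calc ∑ t, X₁ i t * (C * Cᵀ) t l
            = ∑ t, ∑ j, X₁ i t * C t j * C l j := by
              simp [Matrix.mul_apply, Finset.mul_sum, Matrix.transpose_apply, mul_assoc]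
          _ = ∑ j, ∑ t, X₁ i t * C t j * C l j := Finset.sum_comm
          _ = ∑ j, (X₁ * C) i j * C l j := by
              simp [Matrix.mul_apply, Finset.sum_mul]
    have h3 : ∑ j, (A₂ - X₁ * C - B * D) i j * C l j
        = (∑ j, (A₂ i j - (B * D) i j) * C l j) - ∑ j, (X₁ * C) i j * C l j := by
      rw [← Finset.sum_sub_distrib]
      exact Finset.sum_congr rfl fun j _ => by simp [Matrix.sub_apply]; ring
    have h4 := hrow i l
    rw [h2] at h4
    rw [h3]
    linear_combination -h1 - h4
  -- per-row expansion identity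
  have per : ∀ i,
      ((∑ j, (Matrix.hadamard (A₁ - Y) W₁ i j) ^ 2)
        + ∑ j, ((A₂ - Y * C - B * D) i j) ^ 2)
      - ((∑ j, (Matrix.hadamard (A₁ - X₁) W₁ i j) ^ 2)
        + ∑ j, ((A₂ - X₁ * C - B * D) i j) ^ 2)
      = (∑ j, (Matrix.hadamard (Y - X₁) W₁ i j) ^ 2)
        + ∑ j, (((Y - X₁) * C) i j) ^ 2 := by
    intro i
    have e1 : ∀ j, (Matrix.hadamard (A₁ - Y) W₁ i j) ^ 2
        = (Matrix.hadamard (A₁ - X₁) W₁ i j) ^ 2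
          + (Matrix.hadamard (Y - X₁) W₁ i j) ^ 2
          - 2 * ((Y - X₁) i j * (W₁ i j ^ 2 * (A₁ i j - X₁ i j))) := by
      intro j
      simp only [Matrix.hadamard_apply, Matrix.sub_apply]
      ring
    have e2 : ∀ j, ((A₂ - Y * C - B * D) i j) ^ 2
        = ((A₂ - X₁ * C - B * D) i j) ^ 2 + (((Y - X₁) * C) i j) ^ 2
          - 2 * ((A₂ - X₁ * C - B * D) i j * (((Y - X₁) * C) i j)) := by
      intro j
      have hd : ((Y - X₁) * C) i j = (Y * C) i j - (X₁ * C) i j := by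
        rw [Matrix.sub_mul]; simp [Matrix.sub_apply]
      simp only [Matrix.sub_apply, hd]
      ring
    have e3 : ∑ j, (A₂ - X₁ * C - B * D) i j * (((Y - X₁) * C) i j)
        = ∑ l, (Y - X₁) i l * ∑ j, (A₂ - X₁ * C - B * D) i j * C l j := by
      simp only [Matrix.mul_apply, Finset.mul_sum]
      rw [Finset.sum_comm]
      exact Finset.sum_congr rfl fun l _ => Finset.sum_congr rfl fun j _ => by ring
    have s1 : ∑ j, (Matrix.hadamard (A₁ - Y) W₁ i j) ^ 2
        = (∑ j, (Matrix.hadamard (A₁ - X₁) W₁ i j) ^ 2)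
          + (∑ j, (Matrix.hadamard (Y - X₁) W₁ i j) ^ 2)
          - 2 * ∑ j, (Y - X₁) i j * (W₁ i j ^ 2 * (A₁ i j - X₁ i j)) := by
      rw [Finset.sum_congr rfl fun j _ => e1 j, Finset.sum_sub_distrib,
        Finset.sum_add_distrib, ← Finset.mul_sum]
    have s2 : ∑ j, ((A₂ - Y * C - B * D) i j) ^ 2
        = (∑ j, ((A₂ - X₁ * C - B * D) i j) ^ 2)
          + (∑ j, (((Y - X₁) * C) i j) ^ 2)
          - 2 * ∑ l, (Y - X₁) i l * ∑ j, (A₂ - X₁ * C - B * D) i j * C l j := by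
      rw [Finset.sum_congr rfl fun j _ => e2 j, Finset.sum_sub_distrib,
        Finset.sum_add_distrib, ← Finset.mul_sum, e3]
    have hzero : (∑ j, (Y - X₁) i j * (W₁ i j ^ 2 * (A₁ i j - X₁ i j)))
        + ∑ l, (Y - X₁) i l * ∑ j, (A₂ - X₁ * C - B * D) i j * C l j = 0 := by
      rw [← Finset.sum_add_distrib]
      exact Finset.sum_eq_zero fun l _ => by rw [← mul_add, hg i l, mul_zero]
    rw [s1, s2]
    linarith
  -- assemble
  have key : Ffun A₁ W₁ A₂ Y C B D - Ffun A₁ W₁ A₂ X₁ C B D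
      = frobSq (Matrix.hadamard (Y - X₁) W₁) + frobSq ((Y - X₁) * C) := by
    simp only [Ffun, frobSq]
    rw [← Finset.sum_add_distrib, ← Finset.sum_add_distrib, ← Finset.sum_add_distrib,
      ← Finset.sum_sub_distrib]
    exact Finset.sum_congr rfl fun i _ => per i
  have := frobSq_nonneg (Matrix.hadamard (Y - X₁) W₁)
  have := frobSq_nonneg ((Y - X₁) * C)
  linarith
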